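/- arXiv:1307.5203 — 4 statements merged into one kernel-verified Lean document; each statement's English description precedes it below -/
import Mathlib

section
/- For every integer n ≥ 1 and all positive real constants C₃, C₄ there exists a positive real constant C₂, depending only on n, C₃ and C₄, with the following property. Let (X, 𝒜) be a measurable space carrying two finite measures μ and ν, let ℓ be a real number with ℓ ≥ max(2C₄, 4·n!·C₃), let N ≥ 1, let f₁, …, f_N : X → ℝ be nonnegative bounded measurable functions, and let b₁, …, b_N be real numbers, not all zero. Set γᵢ := ∫_X fᵢ dμ and B := Σᵢ fᵢ. Assume: (i) Σᵢ bᵢγᵢ = 0 and γᵢ ≤ 2 for every i; (ii) |B(x) − ℓⁿ/n!| ≤ C₃·ℓ^{n−1} for every x ∈ X; (iii) (ℓ − C₄)ⁿ·μ(A) ≤ ν(A) ≤ (ℓ + C₄)ⁿ·μ(A) for every measurable set A. Then (ℓ / Σᵢ|bᵢ|) · ∫_X B(x)^{−1}·(Σᵢ bᵢ fᵢ(x)) dν(x) ≤ C₂. -/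
open MeasureTheory Filter Finset

private lemma aux_pow_sub_pow (m : ℕ) {a b : ℝ} (hb : 0 ≤ b) (hba : b ≤ a) :
    a ^ (m + 1) - b ^ (m + 1) ≤ (m + 1) * (a - b) * a ^ m := by
  induction m with
  | zero => simp
  | succ k ih =>
    have ha : 0 ≤ a := hb.trans hba
    have hbk : b ^ (k + 1) ≤ a ^ (k + 1) := pow_le_pow_left₀ hb hba _
    have h2 : a * (a ^ (k + 1) - b ^ (k + 1)) ≤ a * ((k + 1) * (a - b) * a ^ k) :=
      mul_le_mul_of_nonneg_left ih ha
    have hab : 0 ≤ a - b := sub_nonneg.2 hba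
    have h3 : (a - b) * b ^ (k + 1) ≤ (a - b) * a ^ (k + 1) :=
      mul_le_mul_of_nonneg_left hbk hab
    have e1 : a ^ (k + 1 + 1) = a * a ^ (k + 1) := by ring
    have e2 : b ^ (k + 1 + 1) = b * b ^ (k + 1) := by ring
    have e3 : a * ((k + 1 : ℝ) * (a - b) * a ^ k) = ((k:ℝ) + 1) * (a - b) * (a ^ (k+1)) := by
      rw [pow_succ]; ring
    push_cast
    rw [e1, e2]
    nlinarith [h2, h3, e3]

private lemma aux_integrable {X : Type*} [MeasurableSpace X] (μ : Measure X)
    [IsFiniteMeasure μ] {g : X → ℝ} (hg : Measurable g) {M : ℝ}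
    (hM : ∀ x, |g x| ≤ M) : Integrable g μ :=
  ⟨hg.aestronglyMeasurable, HasFiniteIntegral.of_bounded (ae_of_all _ hM)⟩

private lemma integral_le_smul {X : Type*} [MeasurableSpace X] {μ ν : Measure X}
    [IsFiniteMeasure μ] {r : ℝ} (hr : 0 < r)
    (hle : ν ≤ ENNReal.ofReal r • μ) {g : X → ℝ} (hg : Measurable g)
    (hg0 : ∀ x, 0 ≤ g x) {M : ℝ} (hM : ∀ x, |g x| ≤ M) :
    ∫ x, g x ∂ν ≤ r * ∫ x, g x ∂μ := by
  have h0 : ENNReal.ofReal r ≠ 0 := by simp [hr]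
  have hint : Integrable g (ENNReal.ofReal r • μ) := by
    rw [integrable_smul_measure h0 ENNReal.ofReal_ne_top]
    exact aux_integrable μ hg hM
  have h1 : ∫ x, g x ∂ν ≤ ∫ x, g x ∂(ENNReal.ofReal r • μ) :=
    integral_mono_measure hle (ae_of_all _ hg0) hint
  rwa [integral_smul_measure, ENNReal.toReal_ofReal hr.le, smul_eq_mul] at h1

private lemma smul_le_integral {X : Type*} [MeasurableSpace X] {μ ν : Measure X}
    [IsFiniteMeasure ν] {r : ℝ} (hr : 0 < r)
    (hle : ENNReal.ofReal r • μ ≤ ν) {g : X → ℝ} (hg : Measurable g)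
    (hg0 : ∀ x, 0 ≤ g x) {M : ℝ} (hM : ∀ x, |g x| ≤ M) :
    r * ∫ x, g x ∂μ ≤ ∫ x, g x ∂ν := by
  have hint : Integrable g ν := aux_integrable ν hg hM
  have h1 : ∫ x, g x ∂(ENNReal.ofReal r • μ) ≤ ∫ x, g x ∂ν :=
    integral_mono_measure hle (ae_of_all _ hg0) hint
  rwa [integral_smul_measure, ENNReal.toReal_ofReal hr.le, smul_eq_mul] at h1

private lemma aux_cancel (l S w : ℝ) (hS : S ≠ 0) : (l / S) * (w * S) = l * w := by
  field_simp

set_option maxHeartbeats 2000000 in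
/-- Measure-theoretic core of Proposition 5.2: a uniform upper bound for the
normalized Chow-norm derivative at `s = 0`. -/
theorem stmt_0 (n : ℕ) (hn : 1 ≤ n) (C₃ C₄ : ℝ) (hC₃ : 0 < C₃) (hC₄ : 0 < C₄) :
    ∃ C₂ : ℝ, 0 < C₂ ∧
      ∀ (X : Type*) [MeasurableSpace X] (μ ν : Measure X),
        IsFiniteMeasure μ → IsFiniteMeasure ν →
        ∀ ℓ : ℝ, max (2 * C₄) (4 * (n.factorial : ℝ) * C₃) ≤ ℓ →
        ∀ N : ℕ, 1 ≤ N →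
        ∀ (f : Fin N → X → ℝ) (b : Fin N → ℝ),
        (∀ i x, 0 ≤ f i x) →
        (∀ i, ∃ M : ℝ, ∀ x, f i x ≤ M) →
        (∀ i, Measurable (f i)) →
        b ≠ 0 →
        (∑ i, b i * ∫ x, f i x ∂μ) = 0 →
        (∀ i, (∫ x, f i x ∂μ) ≤ 2) →
        (∀ x, |(∑ i, f i x) - ℓ ^ n / (n.factorial : ℝ)| ≤ C₃ * ℓ ^ (n - 1)) →
        (∀ A : Set X, MeasurableSet A →
          ENNReal.ofReal ((ℓ - C₄) ^ n) * μ A ≤ ν A ∧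
          ν A ≤ ENNReal.ofReal ((ℓ + C₄) ^ n) * μ A) →
        (ℓ / ∑ i, |b i|) * ∫ x, (∑ i, f i x)⁻¹ * (∑ i, b i * f i x) ∂ν ≤ C₂ := by
  obtain ⟨m, rfl⟩ : ∃ m, n = m + 1 := ⟨n - 1, (Nat.succ_pred_eq_of_pos hn).symm⟩
  set A : ℝ := ((m + 1).factorial : ℝ) with hA
  have hA1 : (1 : ℝ) ≤ A := by
    rw [hA]
    exact_mod_cast Nat.one_le_iff_ne_zero.mpr (m + 1).factorial_ne_zero
  have hA0 : 0 < A := lt_of_lt_of_le one_pos hA1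
  have hC₂pos : (0:ℝ) < 2 ^ (m + 1) * (3 * A ^ 2 * C₃ + 6 * (m + 1) * A * C₄) := by
    have h1 : (0:ℝ) < 2 ^ (m + 1) := by positivity
    have h2 : (0:ℝ) < 3 * A ^ 2 * C₃ :=
      mul_pos (mul_pos (by norm_num) (pow_pos hA0 2)) hC₃
    have h3 : (0:ℝ) < 6 * ((m:ℝ) + 1) * A * C₄ :=
      mul_pos (mul_pos (mul_pos (by norm_num) (by positivity)) hA0) hC₄
    exact mul_pos h1 (by push_cast; linarith)
  refine ⟨2 ^ (m + 1) * (3 * A ^ 2 * C₃ + 6 * (m + 1) * A * C₄), hC₂pos, ?_⟩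
  intro X _ μ ν hμ hν ℓ hℓ N hN f b hf0 hfbd hfmeas hb hortho hγ2 hBhyp hcomp
  haveI := hμ; haveI := hν
  have hℓ1 : 2 * C₄ ≤ ℓ := le_trans (le_max_left _ _) hℓ
  have hℓ2 : 4 * A * C₃ ≤ ℓ := le_trans (le_max_right _ _) hℓ
  have hℓpos : 0 < ℓ := lt_of_lt_of_le (by positivity) hℓ1
  -- basic notation
  set S : ℝ := ∑ i, |b i| with hSdef
  set B : X → ℝ := fun x => ∑ i, f i x with hBdef
  set T : X → ℝ := fun x => ∑ i, b i * f i x with hTdef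
  set P : X → ℝ := fun x => ∑ i, |b i| * f i x with hPdef
  set K : ℝ := ℓ ^ (m + 1) / A with hKdef
  have hKpos : 0 < K := by positivity
  have hLm : (0:ℝ) < ℓ ^ m := by positivity
  -- Bergman bound
  have hBK : ∀ x, |B x - K| ≤ C₃ * ℓ ^ m := by
    intro x
    simpa [hBdef, hKdef, hA] using hBhyp x
  have hCK : C₃ * ℓ ^ m ≤ K / 4 := by
    rw [hKdef, div_div, le_div_iff₀ (by positivity), pow_succ]
    nlinarith [mul_le_mul_of_nonneg_right hℓ2 hLm.le]
  have hB1 : ∀ x, 3 * K / 4 ≤ B x := by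
    intro x
    have h1 := (abs_le.1 (hBK x)).1
    linarith [hCK]
  have hB2 : ∀ x, B x ≤ 5 * K / 4 := by
    intro x
    have h1 := (abs_le.1 (hBK x)).2
    linarith [hCK]
  have hBpos : ∀ x, 0 < B x := fun x => lt_of_lt_of_le (by positivity) (hB1 x)
  -- positivity of S
  have hS : 0 < S := by
    obtain ⟨i, hi⟩ := Function.ne_iff.mp hb
    exact lt_of_lt_of_le (abs_pos.2 hi)
      (Finset.single_le_sum (fun j _ => abs_nonneg (b j)) (mem_univ i))
  -- pointwise bounds
  have hfB : ∀ i x, f i x ≤ B x := fun i x =>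
    Finset.single_le_sum (fun j _ => hf0 j x) (mem_univ i)
  have hP0 : ∀ x, 0 ≤ P x := fun x =>
    Finset.sum_nonneg fun i _ => mul_nonneg (abs_nonneg _) (hf0 i x)
  have hTP : ∀ x, |T x| ≤ P x := by
    intro x
    calc |T x| ≤ ∑ i, |b i * f i x| := Finset.abs_sum_le_sum_abs _ _
      _ = P x := by
          simp [hPdef, abs_mul, abs_of_nonneg (hf0 _ x)]
  have hPSB : ∀ x, P x ≤ S * B x := by
    intro x
    rw [hSdef, Finset.sum_mul]
    exact Finset.sum_le_sum fun i _ =>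
      mul_le_mul_of_nonneg_left (hfB i x) (abs_nonneg _)
  -- the functions h and p
  set h : X → ℝ := fun x => (B x)⁻¹ * T x with hhdef
  set p : X → ℝ := fun x => (B x)⁻¹ * P x with hpdef
  have hp0 : ∀ x, 0 ≤ p x := fun x =>
    mul_nonneg (inv_nonneg.2 (hBpos x).le) (hP0 x)
  have hpS : ∀ x, p x ≤ S := by
    intro x
    have hx := hBpos x
    calc p x ≤ (B x)⁻¹ * (S * B x) :=
          mul_le_mul_of_nonneg_left (hPSB x) (inv_nonneg.2 hx.le)
      _ = S := by field_simp
  have hhp : ∀ x, |h x| ≤ p x := by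
    intro x
    rw [hhdef]
    simp only
    rw [abs_mul, abs_of_nonneg (inv_nonneg.2 (hBpos x).le)]
    exact mul_le_mul_of_nonneg_left (hTP x) (inv_nonneg.2 (hBpos x).le)
  have hhS : ∀ x, |h x| ≤ S := fun x => (hhp x).trans (hpS x)
  have hpSabs : ∀ x, |p x| ≤ S := fun x => by
    rw [abs_of_nonneg (hp0 x)]; exact hpS x
  -- measurability
  have hBmeas : Measurable B := Finset.measurable_sum _ fun i _ => hfmeas i
  have hTmeas : Measurable T :=
    Finset.measurable_sum _ fun i _ => (hfmeas i).const_mul (b i)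
  have hPmeas : Measurable P :=
    Finset.measurable_sum _ fun i _ => (hfmeas i).const_mul |b i|
  have hhmeas : Measurable h := hBmeas.inv.mul hTmeas
  have hpmeas : Measurable p := hBmeas.inv.mul hPmeas
  -- integrability of the f i
  have hfint : ∀ i, Integrable (f i) μ := by
    intro i
    obtain ⟨M, hM⟩ := hfbd i
    exact aux_integrable μ (hfmeas i) (M := M) fun x => by
      rw [abs_of_nonneg (hf0 i x)]; exact hM x
  have hTint : Integrable T μ :=
    integrable_finset_sum _ fun i _ => (hfint i).const_mul (b i)
  have hPint : Integrable P μ :=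
    integrable_finset_sum _ fun i _ => (hfint i).const_mul |b i|
  have hhintμ : Integrable h μ := aux_integrable μ hhmeas hhS
  have hpintμ : Integrable p μ := aux_integrable μ hpmeas hpSabs
  have hhintν : Integrable h ν := aux_integrable ν hhmeas hhS
  have hpintν : Integrable p ν := aux_integrable ν hpmeas hpSabs
  -- integral computations
  have hTμ : ∫ x, T x ∂μ = 0 := by
    rw [hTdef]
    rw [integral_finset_sum _ fun i _ => (hfint i).const_mul (b i)]
    simpa [integral_const_mul] using hortho
  have hPμ : ∫ x, P x ∂μ ≤ 2 * S := by
    rw [hPdef, integral_finset_sum _ fun i _ => (hfint i).const_mul |b i|]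
    calc (∑ i, ∫ x, |b i| * f i x ∂μ) = ∑ i, |b i| * ∫ x, f i x ∂μ := by
          simp [integral_const_mul]
      _ ≤ ∑ i, |b i| * 2 :=
          Finset.sum_le_sum fun i _ => mul_le_mul_of_nonneg_left (hγ2 i) (abs_nonneg _)
      _ = 2 * S := by rw [← Finset.sum_mul, ← hSdef]; exact mul_comm _ _
  have hPμ0 : 0 ≤ ∫ x, P x ∂μ := integral_nonneg hP0
  -- bound for ∫ p dμ
  have hpμ : ∫ x, p x ∂μ ≤ 8 * S / (3 * K) := by
    have hpt : ∀ x, p x ≤ (3 * K / 4)⁻¹ * P x := by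
      intro x
      exact mul_le_mul_of_nonneg_right
        (inv_anti₀ (by positivity) (hB1 x)) (hP0 x)
    calc ∫ x, p x ∂μ ≤ ∫ x, (3 * K / 4)⁻¹ * P x ∂μ :=
          integral_mono hpintμ (hPint.const_mul _) hpt
      _ = (3 * K / 4)⁻¹ * ∫ x, P x ∂μ := integral_const_mul _ _
      _ ≤ (3 * K / 4)⁻¹ * (2 * S) :=
          mul_le_mul_of_nonneg_left hPμ (by positivity)
      _ = 8 * S / (3 * K) := by field_simp; ring
  have hpμ0 : 0 ≤ ∫ x, p x ∂μ := integral_nonneg hp0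
  -- bound for ∫ h dμ
  set c : ℝ := 4 * C₃ * ℓ ^ m / (3 * K ^ 2) with hcdef
  have hc0 : 0 < c := by positivity
  have hhμ : ∫ x, h x ∂μ ≤ 2 * c * S := by
    have hpt : ∀ x, h x ≤ K⁻¹ * T x + c * P x := by
      intro x
      have hBx := hBpos x
      have hBne : B x ≠ 0 := hBx.ne'
      have hKne : K ≠ 0 := hKpos.ne'
      have key : |(B x)⁻¹ - K⁻¹| ≤ c := by
        rw [inv_sub_inv hBne hKne, abs_div, abs_mul,
          abs_of_pos hBx, abs_of_pos hKpos]
        calc |K - B x| / (B x * K) ≤ (C₃ * ℓ ^ m) / (3 * K / 4 * K) := by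
              apply div_le_div₀ (by positivity) _ (by positivity)
                (mul_le_mul_of_nonneg_right (hB1 x) hKpos.le)
              rw [abs_sub_comm]; exact hBK x
          _ = c := by rw [hcdef]; field_simp
      have h1 : h x - K⁻¹ * T x = ((B x)⁻¹ - K⁻¹) * T x := by
        rw [hhdef]; ring
      have h2 : ((B x)⁻¹ - K⁻¹) * T x ≤ |((B x)⁻¹ - K⁻¹) * T x| := le_abs_self _
      have h3 : |((B x)⁻¹ - K⁻¹) * T x| ≤ c * P x := by
        rw [abs_mul]
        exact mul_le_mul key (hTP x) (abs_nonneg _) hc0.le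
      linarith [h1 ▸ (h2.trans h3)]
    calc ∫ x, h x ∂μ ≤ ∫ x, (K⁻¹ * T x + c * P x) ∂μ :=
          integral_mono hhintμ ((hTint.const_mul _).add (hPint.const_mul _)) hpt
      _ = K⁻¹ * ∫ x, T x ∂μ + c * ∫ x, P x ∂μ := by
          rw [integral_add (hTint.const_mul _) (hPint.const_mul _),
            integral_const_mul, integral_const_mul]
      _ = c * ∫ x, P x ∂μ := by rw [hTμ]; ring
      _ ≤ c * (2 * S) := mul_le_mul_of_nonneg_left hPμ hc0.le
      _ = 2 * c * S := by ring
  -- measure comparison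
  have hC₄ℓ : C₄ ≤ ℓ / 2 := by linarith
  have hRm : 0 < ℓ - C₄ := by linarith
  have hRp : 0 < ℓ + C₄ := by linarith
  set Rp : ℝ := (ℓ + C₄) ^ (m + 1) with hRpdef
  set Rm : ℝ := (ℓ - C₄) ^ (m + 1) with hRmdef
  have hRppos : 0 < Rp := pow_pos hRp _
  have hRmpos : 0 < Rm := pow_pos hRm _
  have hle1 : ν ≤ ENNReal.ofReal Rp • μ := by
    rw [Measure.le_iff]
    intro s hs
    simpa [Measure.smul_apply, smul_eq_mul] using (hcomp s hs).2
  have hle2 : ENNReal.ofReal Rm • μ ≤ ν := by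
    rw [Measure.le_iff]
    intro s hs
    simpa [Measure.smul_apply, smul_eq_mul] using (hcomp s hs).1
  -- ∫ (h+p) dν ≤ Rp ∫ (h+p) dμ
  have hhp0 : ∀ x, 0 ≤ h x + p x := by
    intro x
    have := (abs_le.1 (hhp x)).1
    linarith
  have hhpbd : ∀ x, |h x + p x| ≤ 2 * S := by
    intro x
    rw [abs_of_nonneg (hhp0 x)]
    linarith [(abs_le.1 (hhS x)).2, hpS x]
  have step1 : ∫ x, (h x + p x) ∂ν ≤ Rp * ∫ x, (h x + p x) ∂μ :=
    integral_le_smul hRppos hle1 (hhmeas.add hpmeas) hhp0 hhpbd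
  have step2 : Rm * ∫ x, p x ∂μ ≤ ∫ x, p x ∂ν :=
    smul_le_integral hRmpos hle2 hpmeas hp0 hpSabs
  have hsplitν : ∫ x, (h x + p x) ∂ν = ∫ x, h x ∂ν + ∫ x, p x ∂ν :=
    integral_add hhintν hpintν
  have hsplitμ : ∫ x, (h x + p x) ∂μ = ∫ x, h x ∂μ + ∫ x, p x ∂μ :=
    integral_add hhintμ hpintμ
  have hRmRp : Rm ≤ Rp := pow_le_pow_left₀ hRm.le (by linarith) _
  have hI : ∫ x, h x ∂ν ≤ Rp * (2 * c * S) + (Rp - Rm) * (8 * S / (3 * K)) := by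
    have e1 : ∫ x, h x ∂ν ≤ Rp * ∫ x, h x ∂μ + (Rp - Rm) * ∫ x, p x ∂μ := by
      have := step1
      rw [hsplitν, hsplitμ] at this
      nlinarith [step2]
    have e2 : Rp * ∫ x, h x ∂μ ≤ Rp * (2 * c * S) :=
      mul_le_mul_of_nonneg_left hhμ hRppos.le
    have e3 : (Rp - Rm) * ∫ x, p x ∂μ ≤ (Rp - Rm) * (8 * S / (3 * K)) :=
      mul_le_mul_of_nonneg_left hpμ (by linarith)
    linarith
  -- final arithmetic
  have hgoal1 : (ℓ / S) * ∫ x, h x ∂ν ≤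
      (ℓ / S) * (Rp * (2 * c * S) + (Rp - Rm) * (8 * S / (3 * K))) :=
    mul_le_mul_of_nonneg_left hI (by positivity)
  have hgoal2 : (ℓ / S) * (Rp * (2 * c * S) + (Rp - Rm) * (8 * S / (3 * K)))
      = ℓ * (Rp * (2 * c) + (Rp - Rm) * (8 / (3 * K))) := by
    have hsum : Rp * (2 * c * S) + (Rp - Rm) * (8 * S / (3 * K))
        = (Rp * (2 * c) + (Rp - Rm) * (8 / (3 * K))) * S := by ring
    rw [hsum, aux_cancel ℓ S _ hS.ne']
  -- bounds on Rp and Rp - Rm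
  have hQ32 : ((3:ℝ)/2) ^ m ≤ 2 ^ m := pow_le_pow_left₀ (by norm_num) (by norm_num) _
  have hRpbd : Rp ≤ (3 / 2) * ((3/2) ^ m) * (ℓ ^ m * ℓ) := by
    calc Rp ≤ (3 / 2 * ℓ) ^ (m + 1) := pow_le_pow_left₀ hRp.le (by linarith) _
      _ = (3 / 2) * ((3/2) ^ m) * (ℓ ^ m * ℓ) := by
          rw [mul_pow, pow_succ, pow_succ]; ring
  have hdiffbd : Rp - Rm ≤ (m + 1) * (2 * C₄) * ((3/2) ^ m * ℓ ^ m) := by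
    have h1 : Rp - Rm ≤ (m + 1) * ((ℓ + C₄) - (ℓ - C₄)) * (ℓ + C₄) ^ m :=
      aux_pow_sub_pow m hRm.le (by linarith)
    have h2 : (ℓ + C₄) ^ m ≤ (3 / 2 * ℓ) ^ m := pow_le_pow_left₀ hRp.le (by linarith) _
    have h3 : ((ℓ + C₄) - (ℓ - C₄)) = 2 * C₄ := by ring
    rw [h3] at h1
    calc Rp - Rm ≤ (m + 1) * (2 * C₄) * (ℓ + C₄) ^ m := h1
      _ ≤ (m + 1) * (2 * C₄) * (3 / 2 * ℓ) ^ m := by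
          apply mul_le_mul_of_nonneg_left h2 (by positivity)
      _ = (m + 1) * (2 * C₄) * ((3/2) ^ m * ℓ ^ m) := by rw [mul_pow]
  -- first term
  have hterm1 : ℓ * (Rp * (2 * c)) ≤ 2 ^ (m + 1) * (3 * A ^ 2 * C₃) := by
    have step : ℓ * (Rp * (2 * c)) ≤ ℓ * (((3 / 2) * ((3/2) ^ m) * (ℓ ^ m * ℓ)) * (2 * c)) := by
      apply mul_le_mul_of_nonneg_left _ hℓpos.le
      apply mul_le_mul_of_nonneg_right hRpbd (by positivity)
    have hval : ℓ * (((3 / 2) * ((3/2) ^ m) * (ℓ ^ m * ℓ)) * (2 * c))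
        = 4 * C₃ * A ^ 2 * (3/2) ^ m := by
      rw [hcdef, hKdef]
      have : (ℓ ^ (m+1)) = ℓ ^ m * ℓ := pow_succ ℓ m
      rw [this]
      field_simp
    rw [hval] at step
    calc ℓ * (Rp * (2 * c)) ≤ 4 * C₃ * A ^ 2 * (3/2) ^ m := step
      _ ≤ 4 * C₃ * A ^ 2 * 2 ^ m := by
          apply mul_le_mul_of_nonneg_left hQ32 (by positivity)
      _ = 4 * (A ^ 2 * C₃ * 2 ^ m) := by ring
      _ ≤ 6 * (A ^ 2 * C₃ * 2 ^ m) := by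
          have hq : (0:ℝ) ≤ A ^ 2 * C₃ * 2 ^ m := by positivity
          linarith
      _ = 2 ^ (m + 1) * (3 * A ^ 2 * C₃) := by rw [pow_succ]; ring
  -- second term
  have hterm2 : ℓ * ((Rp - Rm) * (8 / (3 * K))) ≤ 2 ^ (m + 1) * (6 * (m + 1) * A * C₄) := by
    have hfrac : 0 ≤ 8 / (3 * K) := by positivity
    have step : ℓ * ((Rp - Rm) * (8 / (3 * K)))
        ≤ ℓ * (((m + 1) * (2 * C₄) * ((3/2) ^ m * ℓ ^ m)) * (8 / (3 * K))) := by
      apply mul_le_mul_of_nonneg_left _ hℓpos.le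
      apply mul_le_mul_of_nonneg_right hdiffbd hfrac
    have hval : ℓ * (((m + 1) * (2 * C₄) * ((3/2) ^ m * ℓ ^ m)) * (8 / (3 * K)))
        = (16 / 3) * (m + 1) * C₄ * A * (3/2) ^ m := by
      rw [hKdef]
      have : (ℓ ^ (m+1)) = ℓ ^ m * ℓ := pow_succ ℓ m
      rw [this]
      field_simp
      ring
    rw [hval] at step
    calc ℓ * ((Rp - Rm) * (8 / (3 * K))) ≤ (16 / 3) * (m + 1) * C₄ * A * (3/2) ^ m := step
      _ ≤ (16 / 3) * (m + 1) * C₄ * A * 2 ^ m := by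
          apply mul_le_mul_of_nonneg_left hQ32 (by positivity)
      _ = (16 / 3) * (((m:ℝ) + 1) * C₄ * A * 2 ^ m) := by push_cast; ring
      _ ≤ 12 * (((m:ℝ) + 1) * C₄ * A * 2 ^ m) := by
          have hq : (0:ℝ) ≤ ((m:ℝ) + 1) * C₄ * A * 2 ^ m := by positivity
          linarith
      _ = 2 ^ (m + 1) * (6 * (m + 1) * A * C₄) := by rw [pow_succ]; push_cast; ring
  -- conclude
  have hfinal : (ℓ / S) * ∫ x, h x ∂ν
      ≤ 2 ^ (m + 1) * (3 * A ^ 2 * C₃ + 6 * (m + 1) * A * C₄) := by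
    calc (ℓ / S) * ∫ x, h x ∂ν
        ≤ ℓ * (Rp * (2 * c) + (Rp - Rm) * (8 / (3 * K))) := by
          rw [← hgoal2]; exact hgoal1
      _ = ℓ * (Rp * (2 * c)) + ℓ * ((Rp - Rm) * (8 / (3 * K))) := by ring
      _ ≤ 2 ^ (m + 1) * (3 * A ^ 2 * C₃) + 2 ^ (m + 1) * (6 * (m + 1) * A * C₄) :=
          add_le_add hterm1 hterm2
      _ = 2 ^ (m + 1) * (3 * A ^ 2 * C₃ + 6 * (m + 1) * A * C₄) := by ring
  exact hfinal
end

section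
/- Let (f_j)_{j∈ℕ} and (g_j)_{j∈ℕ} be sequences of differentiable convex functions from ℝ to ℝ, and let (ε_j) be a sequence of nonnegative real numbers with ε_j → 0 as j → ∞. Assume that for every j and every integer p ≥ 1 one has |(f_j(1−p) − f_j(−p)) − (g_j(1−p) − g_j(−p))| ≤ ε_j. Then inf_{s∈ℝ} liminf_{j→∞} f_j′(s) = inf_{s∈ℝ} liminf_{j→∞} g_j′(s), as an equality in the extended real numbers [−∞, +∞]. -/
open Filter

private lemma aux_le (f g : ℕ → ℝ → ℝ)
    (hfd : ∀ j, Differentiable ℝ (f j)) (hfc : ∀ j, ConvexOn ℝ Set.univ (f j))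
    (hgd : ∀ j, Differentiable ℝ (g j)) (hgc : ∀ j, ConvexOn ℝ Set.univ (g j))
    (ε : ℕ → ℝ) (hε : Tendsto ε atTop (nhds 0))
    (h : ∀ j : ℕ, ∀ p : ℕ, 1 ≤ p →
      (f j (1 - (p : ℝ)) - f j (-(p : ℝ))) - (g j (1 - (p : ℝ)) - g j (-(p : ℝ))) ≤ ε j) :
    (⨅ s : ℝ, atTop.liminf fun j => ((deriv (f j) s : ℝ) : EReal)) ≤
      (⨅ s : ℝ, atTop.liminf fun j => ((deriv (g j) s : ℝ) : EReal)) := by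
  refine le_iInf fun s => ?_
  -- choose p with 1 - p ≤ s and 1 ≤ p
  obtain ⟨p, hp1, hps⟩ : ∃ p : ℕ, 1 ≤ p ∧ 1 - (p : ℝ) ≤ s := by
    refine ⟨⌈1 - s⌉₊ + 1, le_add_self, ?_⟩
    have := Nat.le_ceil (1 - s)
    push_cast
    linarith
  -- key pointwise inequality
  have key : ∀ j, deriv (f j) (-(p : ℝ)) ≤ deriv (g j) (1 - (p : ℝ)) + ε j := by
    intro j
    have hlt : -(p : ℝ) < 1 - (p : ℝ) := by linarith
    have h1 : deriv (f j) (-(p : ℝ)) ≤ slope (f j) (-(p : ℝ)) (1 - (p : ℝ)) :=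
      (hfc j).deriv_le_slope (Set.mem_univ _) (Set.mem_univ _) hlt ((hfd j).differentiableAt)
    have h2 : slope (g j) (-(p : ℝ)) (1 - (p : ℝ)) ≤ deriv (g j) (1 - (p : ℝ)) :=
      (hgc j).slope_le_deriv (Set.mem_univ _) (Set.mem_univ _) hlt ((hgd j).differentiableAt)
    have hs1 : slope (f j) (-(p : ℝ)) (1 - (p : ℝ)) = f j (1 - (p : ℝ)) - f j (-(p : ℝ)) := by
      rw [slope_def_field]; ring_nf
    have hs2 : slope (g j) (-(p : ℝ)) (1 - (p : ℝ)) = g j (1 - (p : ℝ)) - g j (-(p : ℝ)) := by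
      rw [slope_def_field]; ring_nf
    have := h j p hp1
    rw [hs1] at h1; rw [hs2] at h2
    linarith
  -- pass to liminf in EReal
  have step1 : (atTop.liminf fun j => ((deriv (f j) (-(p : ℝ)) : ℝ) : EReal)) ≤
      atTop.liminf ((fun j => ((ε j : ℝ) : EReal)) + fun j => ((deriv (g j) (1 - (p : ℝ)) : ℝ) : EReal)) := by
    refine liminf_le_liminf (Eventually.of_forall fun j => ?_)
    simp only [Pi.add_apply, ← EReal.coe_add]
    exact EReal.coe_le_coe_iff.mpr (by linarith [key j])
  have hlimsup : atTop.limsup (fun j => ((ε j : ℝ) : EReal)) = 0 := by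
    have : Tendsto (fun j => ((ε j : ℝ) : EReal)) atTop (nhds (0 : EReal)) := by
      rw [show ((0 : EReal)) = ((0 : ℝ) : EReal) by norm_num, EReal.tendsto_coe]
      exact hε
    exact this.limsup_eq
  have step2 : atTop.liminf ((fun j => ((ε j : ℝ) : EReal)) + fun j => ((deriv (g j) (1 - (p : ℝ)) : ℝ) : EReal)) ≤
      atTop.limsup (fun j => ((ε j : ℝ) : EReal)) +
      atTop.liminf (fun j => ((deriv (g j) (1 - (p : ℝ)) : ℝ) : EReal)) := by
    refine EReal.liminf_add_le ?_ ?_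
    · left; rw [hlimsup]; simp
    · left; rw [hlimsup]; simp
  rw [hlimsup, zero_add] at step2
  -- liminf of g-derivatives is monotone in s
  have mono : (atTop.liminf fun j => ((deriv (g j) (1 - (p : ℝ)) : ℝ) : EReal)) ≤
      atTop.liminf fun j => ((deriv (g j) s : ℝ) : EReal) := by
    refine liminf_le_liminf (Eventually.of_forall fun j => ?_)
    exact_mod_cast (hgc j).monotoneOn_deriv (fun x _ => (hgd j).differentiableAt)
      (Set.mem_univ _) (Set.mem_univ _) hps
  exact le_trans (iInf_le _ (-(p : ℝ))) (le_trans step1 (le_trans step2 mono))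

/-- Real-analysis core of Lemma 5.9: two sequences of differentiable convex
functions whose increments over `[−p, 1−p]` differ by at most `ε j → 0` have
the same limit `lim_{s→−∞} liminf_j` of the derivatives. -/
theorem stmt_2 (f g : ℕ → ℝ → ℝ)
    (hfd : ∀ j, Differentiable ℝ (f j)) (hfc : ∀ j, ConvexOn ℝ Set.univ (f j))
    (hgd : ∀ j, Differentiable ℝ (g j)) (hgc : ∀ j, ConvexOn ℝ Set.univ (g j))
    (ε : ℕ → ℝ) (hε0 : ∀ j, 0 ≤ ε j) (hε : Tendsto ε atTop (nhds 0))
    (h : ∀ j : ℕ, ∀ p : ℕ, 1 ≤ p →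
      |(f j (1 - (p : ℝ)) - f j (-(p : ℝ))) - (g j (1 - (p : ℝ)) - g j (-(p : ℝ)))| ≤ ε j) :
    (⨅ s : ℝ, atTop.liminf fun j => ((deriv (f j) s : ℝ) : EReal)) =
      (⨅ s : ℝ, atTop.liminf fun j => ((deriv (g j) s : ℝ) : EReal)) := by
  refine le_antisymm
    (aux_le f g hfd hfc hgd hgc ε hε fun j p hp => ?_)
    (aux_le g f hgd hgc hfd hfc ε hε fun j p hp => ?_)
  · exact le_trans (le_abs_self _) (h j p hp)
  · have := h j p hp
    rw [abs_sub_comm] at this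
    exact le_trans (le_abs_self _) this
end

section
/- Let (X, 𝒜, μ) be a finite measure space with total mass V := μ(X) > 0. Let N ≥ 1, let g₁, …, g_N : X → ℝ be nonnegative bounded measurable functions, let λ₁, …, λ_N be positive reals, let β₁, …, β_N be reals not all zero, let c > 0, ℓ > 0, and let ε ∈ (0, 1/2]. Assume: (i) Σᵢ λᵢ² gᵢ(x) = c for every x ∈ X; (ii) |λᵢ^{−2} e^{−2βᵢ} − 1| ≤ ε for every i. Set γᵢ := ∫_X λᵢ² gᵢ dμ and η := (maxᵢ |βᵢ|)/ℓ. Then | ∫_X (Σᵢ βᵢ e^{−2βᵢ} gᵢ(x)) / (π ℓ η · Σᵢ e^{−2βᵢ} gᵢ(x)) dμ(x) − (Σᵢ βᵢ γᵢ)/(π ℓ η c) | ≤ ε·V. -/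
/-!
At each point the integrand is `1 / (π M)` times the mean of `β` for the weights
`exp (-2 βᵢ) gᵢ = λᵢ² gᵢ (1 + δᵢ)` with `|δᵢ| ≤ ε`, where `M = maxᵢ |βᵢ| = ℓ η`, and the main term
integrates `1 / (π M)` times the mean of `β` for the weights `λᵢ² gᵢ`, whose total is `c`.
With `m` the mean of `δ`, the two means differ by `∑ βᵢ λᵢ² gᵢ (δᵢ - m) / (c (1 + m))`.
Since `|· - m|` lies below its chord over `[-ε, ε]`, the mean absolute deviation of `δ` is at most
`ε`, and `1 + m ≥ 1 / 2`; so the difference is at most `2 M ε ≤ π M ε`. Integrating over `X`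
gives `ε V`.
-/

open MeasureTheory Finset

section WeightedMeans

variable {ι : Type*} [Fintype ι]

theorem abs_sum_mul_le_of_abs_le {a δ : ι → ℝ} {ε : ℝ} (ha : ∀ i, 0 ≤ a i)
    (hδ : ∀ i, |δ i| ≤ ε) : |∑ i, a i * δ i| ≤ ε * ∑ i, a i :=
  calc |∑ i, a i * δ i| ≤ ∑ i, |a i * δ i| := abs_sum_le_sum_abs _ _
    _ ≤ ∑ i, a i * ε := sum_le_sum fun i _ => by
        rw [abs_mul, abs_of_nonneg (ha i)]
        exact mul_le_mul_of_nonneg_left (hδ i) (ha i)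
    _ = ε * ∑ i, a i := by rw [← sum_mul, mul_comm]

theorem abs_weighted_mean_le {a δ : ι → ℝ} {c ε : ℝ} (hc : 0 < c) (ha : ∀ i, 0 ≤ a i)
    (hsum : ∑ i, a i = c) (hδ : ∀ i, |δ i| ≤ ε) : |(∑ i, a i * δ i) / c| ≤ ε := by
  rw [abs_div, abs_of_pos hc, div_le_iff₀ hc, ← hsum]
  exact abs_sum_mul_le_of_abs_le ha hδ

/-- The right-hand side is `ε` times the chord of `|· - m|` over `[-ε, ε]`. -/
theorem mul_abs_sub_le_chord {δ m ε : ℝ} (hδ : |δ| ≤ ε) (hm : |m| ≤ ε) :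
    ε * |δ - m| ≤ ε ^ 2 - δ * m := by
  obtain ⟨hδl, hδu⟩ := abs_le.mp hδ
  obtain ⟨hml, hmu⟩ := abs_le.mp hm
  rcases le_total δ m with h | h
  · rw [abs_of_nonpos (by linarith)]; nlinarith
  · rw [abs_of_nonneg (by linarith)]; nlinarith

theorem sum_mul_abs_sub_weighted_mean_le {a δ : ι → ℝ} {c ε : ℝ} (hc : 0 < c) (hε : 0 < ε)
    (ha : ∀ i, 0 ≤ a i) (hsum : ∑ i, a i = c) (hδ : ∀ i, |δ i| ≤ ε) :
    ∑ i, a i * |δ i - (∑ j, a j * δ j) / c| ≤ ε * c := by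
  set m := (∑ j, a j * δ j) / c with hm
  have hmc : ∑ j, a j * δ j = m * c := by rw [hm]; field_simp
  have hm_le : |m| ≤ ε := abs_weighted_mean_le hc ha hsum hδ
  refine le_of_mul_le_mul_left ?_ hε
  calc ε * ∑ i, a i * |δ i - m| = ∑ i, a i * (ε * |δ i - m|) := by
        rw [mul_sum]; exact sum_congr rfl fun i _ => by ring
    _ ≤ ∑ i, a i * (ε ^ 2 - δ i * m) :=
        sum_le_sum fun i _ => mul_le_mul_of_nonneg_left (mul_abs_sub_le_chord (hδ i) hm_le) (ha i)
    _ = ε * (ε * c) - m ^ 2 * c := by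
        simp only [mul_sub, sum_sub_distrib, ← sum_mul, ← mul_assoc, hsum, hmc]; ring
    _ ≤ ε * (ε * c) := by nlinarith [sq_nonneg m]

theorem abs_weighted_mean_perturb_sub_le {a δ b : ι → ℝ} {c ε M : ℝ} (hc : 0 < c) (hε : 0 < ε)
    (hε' : ε ≤ 1 / 2) (hM : 0 ≤ M) (ha : ∀ i, 0 ≤ a i) (hsum : ∑ i, a i = c)
    (hδ : ∀ i, |δ i| ≤ ε) (hb : ∀ i, |b i| ≤ M) :
    |(∑ i, b i * (a i * (1 + δ i))) / (∑ i, a i * (1 + δ i)) - (∑ i, b i * a i) / c|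
      ≤ 2 * M * ε := by
  set m := (∑ j, a j * δ j) / c with hm
  have hm_le : |m| ≤ ε := abs_weighted_mean_le hc ha hsum hδ
  have hden : ∑ i, a i * (1 + δ i) = c * (1 + m) := by
    simp only [mul_add, mul_one, sum_add_distrib, hsum, hm]; field_simp
  have hm_ge : -(1 / 2) ≤ m := by linarith [(abs_le.mp hm_le).1]
  have hden_ge : c / 2 ≤ c * (1 + m) := by nlinarith
  have hden_pos : 0 < c * (1 + m) := by linarith
  have hdiff : (∑ i, b i * (a i * (1 + δ i))) / (∑ i, a i * (1 + δ i)) - (∑ i, b i * a i) / c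
      = (∑ i, b i * (a i * (δ i - m))) / (c * (1 + m)) := by
    have hnum : ∑ i, b i * (a i * (δ i - m))
        = ∑ i, b i * (a i * (1 + δ i)) - (1 + m) * ∑ i, b i * a i := by
      rw [mul_sum, ← sum_sub_distrib]; exact sum_congr rfl fun i _ => by ring
    have : 1 + m ≠ 0 := by linarith
    rw [hden, hnum]
    field_simp
  have hT : |∑ i, b i * (a i * (δ i - m))| ≤ M * (ε * c) :=
    calc |∑ i, b i * (a i * (δ i - m))| ≤ ∑ i, M * (a i * |δ i - m|) :=
          (abs_sum_le_sum_abs _ _).trans <| sum_le_sum fun i _ => by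
            rw [abs_mul, abs_mul, abs_of_nonneg (ha i)]
            exact mul_le_mul_of_nonneg_right (hb i) (mul_nonneg (ha i) (abs_nonneg _))
      _ ≤ M * (ε * c) := by
          rw [← mul_sum]
          exact mul_le_mul_of_nonneg_left (sum_mul_abs_sub_weighted_mean_le hc hε ha hsum hδ) hM
  rw [hdiff, abs_div, abs_of_pos hden_pos, div_le_iff₀ hden_pos]
  nlinarith [mul_nonneg hM hε.le]

theorem abs_weighted_mean_div_sub_le {p g w β : ι → ℝ} {c ε M : ℝ} (hc : 0 < c) (hε : 0 < ε)
    (hε' : ε ≤ 1 / 2) (hM : 0 < M) (hp : ∀ i, 0 < p i) (hg : ∀ i, 0 ≤ g i)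
    (hβ : ∀ i, |β i| ≤ M) (hsum : ∑ i, p i * g i = c) (hw : ∀ i, |(p i)⁻¹ * w i - 1| ≤ ε) :
    |(∑ i, β i * w i * g i) / (Real.pi * M * ∑ i, w i * g i) -
      (∑ i, β i * (p i * g i)) / (Real.pi * M * c)| ≤ ε := by
  have hwg : ∀ i, w i * g i = p i * g i * (1 + ((p i)⁻¹ * w i - 1)) := fun i => by
    field_simp [(hp i).ne']
    ring
  have hmean := abs_weighted_mean_perturb_sub_le hc hε hε' hM.le
    (fun i => mul_nonneg (hp i).le (hg i)) hsum hw hβ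
  simp only [← hwg] at hmean
  have hπM : 0 < Real.pi * M := mul_pos Real.pi_pos hM
  have hsplit (u v : ℝ) : u / (Real.pi * M * v) = u / v / (Real.pi * M) := by
    rw [div_div, mul_comm v]
  rw [hsplit, hsplit, ← sub_div, abs_div, abs_of_pos hπM, div_le_iff₀ hπM]
  simp only [mul_assoc]
  exact hmean.trans (by nlinarith [Real.pi_gt_three, mul_pos hM hε])

end WeightedMeans

theorem abs_integral_sub_integral_le {X : Type*} [MeasurableSpace X] {μ : Measure X}
    [IsFiniteMeasure μ] {F G : X → ℝ} {C : ℝ} (hF : AEStronglyMeasurable F μ)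
    (hG : Integrable G μ) (hFG : ∀ x, |F x - G x| ≤ C) :
    |∫ x, F x ∂μ - ∫ x, G x ∂μ| ≤ C * μ.real Set.univ := by
  have hFG' : ∀ x, ‖(F - G) x‖ ≤ C := hFG
  have hF_int : Integrable F μ := by
    simpa using (Integrable.of_bound (hF.sub hG.aestronglyMeasurable) C (ae_of_all _ hFG')).add hG
  rw [← integral_sub hF_int hG]
  exact norm_integral_le_of_norm_le_const (ae_of_all _ hFG')

theorem stmt_4_general {X : Type*} [MeasurableSpace X] (μ : Measure X) [IsFiniteMeasure μ]
    (N : ℕ) (hN : 1 ≤ N) (g : Fin N → X → ℝ) (lam β : Fin N → ℝ)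
    (hg0 : ∀ i x, 0 ≤ g i x) (hgb : ∀ i, ∃ M : ℝ, ∀ x, g i x ≤ M)
    (hgm : ∀ i, Measurable (g i))
    (hlam : ∀ i, 0 < lam i) (hβ : β ≠ 0)
    (c ℓ ε : ℝ) (hc : 0 < c) (hℓ : 0 < ℓ) (hε : 0 < ε) (hε' : ε ≤ 1 / 2)
    (hi : ∀ x, ∑ i, (lam i) ^ 2 * g i x = c)
    (hii : ∀ i, |((lam i) ^ 2)⁻¹ * Real.exp (-(2 * β i)) - 1| ≤ ε)
    (η : ℝ)
    (hη : η = (Finset.univ.sup'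
      (Finset.univ_nonempty_iff.mpr (Fin.pos_iff_nonempty.mp hN))
      fun i => |β i|) / ℓ) :
    |(∫ x, (∑ i, β i * Real.exp (-(2 * β i)) * g i x) /
        (Real.pi * ℓ * η * ∑ i, Real.exp (-(2 * β i)) * g i x) ∂μ) -
      (∑ i, β i * ∫ x, (lam i) ^ 2 * g i x ∂μ) / (Real.pi * ℓ * η * c)|
      ≤ ε * (μ Set.univ).toReal := by
  set M := univ.sup' (univ_nonempty_iff.mpr (Fin.pos_iff_nonempty.mp hN)) fun i => |β i|
  have hβM (i : Fin N) : |β i| ≤ M := le_sup' (fun j => |β j|) (mem_univ i)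
  have hM : 0 < M := by
    obtain ⟨i, hβi⟩ := Function.ne_iff.mp hβ
    exact (abs_pos.mpr hβi).trans_le (hβM i)
  have hπℓη : Real.pi * ℓ * η = Real.pi * M := by rw [hη]; field_simp
  have hg_int (i : Fin N) : Integrable (fun x => lam i ^ 2 * g i x) μ := by
    obtain ⟨C, hC⟩ := hgb i
    refine (Integrable.of_bound (hgm i).aestronglyMeasurable C (ae_of_all _ fun x => ?_)).const_mul _
    rw [Real.norm_eq_abs, abs_of_nonneg (hg0 i x)]
    exact hC x
  have hmain : (∑ i, β i * ∫ x, lam i ^ 2 * g i x ∂μ) / (Real.pi * M * c)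
      = ∫ x, (∑ i, β i * (lam i ^ 2 * g i x)) / (Real.pi * M * c) ∂μ := by
    rw [integral_div, integral_finsetSum _ fun i _ => (hg_int i).const_mul _]
    simp only [integral_const_mul]
  rw [hπℓη, hmain, ← measureReal_def]
  exact abs_integral_sub_integral_le (Measurable.aestronglyMeasurable (by fun_prop))
    ((integrable_finsetSum _ fun i _ => (hg_int i).const_mul _).div_const _)
    fun x => abs_weighted_mean_div_sub_le hc hε hε' hM (fun i => pow_pos (hlam i) 2)
      (fun i => hg0 i x) hβM (hi x) hii

/-- Analytic content of (6.12)–(6.15): the derivative of the Chow-norm function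
at `s = −η` computed from a polybalanced metric equals the main term
`(Σᵢ βᵢγᵢ)/(πℓηc)` up to an error of size `ε·V`. -/
theorem stmt_4 {X : Type*} [MeasurableSpace X] (μ : Measure X) [IsFiniteMeasure μ]
    (hV : 0 < (μ Set.univ).toReal)
    (N : ℕ) (hN : 1 ≤ N) (g : Fin N → X → ℝ) (lam β : Fin N → ℝ)
    (hg0 : ∀ i x, 0 ≤ g i x) (hgb : ∀ i, ∃ M : ℝ, ∀ x, g i x ≤ M)
    (hgm : ∀ i, Measurable (g i))
    (hlam : ∀ i, 0 < lam i) (hβ : β ≠ 0)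
    (c ℓ ε : ℝ) (hc : 0 < c) (hℓ : 0 < ℓ) (hε : 0 < ε) (hε' : ε ≤ 1 / 2)
    (hi : ∀ x, ∑ i, (lam i) ^ 2 * g i x = c)
    (hii : ∀ i, |((lam i) ^ 2)⁻¹ * Real.exp (-(2 * β i)) - 1| ≤ ε)
    (η : ℝ)
    (hη : η = (Finset.univ.sup'
      (Finset.univ_nonempty_iff.mpr (Fin.pos_iff_nonempty.mp hN))
      fun i => |β i|) / ℓ) :
    |(∫ x, (∑ i, β i * Real.exp (-(2 * β i)) * g i x) /
        (Real.pi * ℓ * η * ∑ i, Real.exp (-(2 * β i)) * g i x) ∂μ) -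
      (∑ i, β i * ∫ x, (lam i) ^ 2 * g i x ∂μ) / (Real.pi * ℓ * η * c)|
      ≤ ε * (μ Set.univ).toReal :=
  stmt_4_general μ N hN g lam β hg0 hgb hgm hlam hβ c ℓ ε hc hℓ hε hε' hi hii η hη
end

section
/- For every integer n ≥ 1, every real number Ŝ, and all positive real constants C and C′, there exist a constant C₂ > 0 and a real number ℓ₀ ≥ 1, depending only on n, Ŝ, C, C′, with the following property. Let (X, 𝒜) be a measurable space with finite measures μ and ν, let ℓ ≥ ℓ₀, let N ≥ 1, let f₁, …, f_N : X → ℝ be nonnegative bounded measurable functions, and let b₁, …, b_N be reals, not all zero. Set γᵢ := ∫_X fᵢ dμ and B := Σᵢ fᵢ. Assume: (i) Σᵢ bᵢγᵢ = 0 and γᵢ ≤ 2 for every i; (ii) |n!·B(x) − ℓⁿ − (Ŝ/2)·ℓ^{n−1}| ≤ C·ℓ^{n−2} for every x ∈ X; (iii) (ℓ − C′ℓ^{−2})ⁿ·μ(A) ≤ ν(A) ≤ (ℓ + C′ℓ^{−2})ⁿ·μ(A) for every measurable set A. Then |(ℓ / Σᵢ|bᵢ|) · ∫_X B(x)^{−1}(Σᵢ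 bᵢ fᵢ(x)) dν(x)| ≤ C₂/ℓ. -/
open MeasureTheory Finset

/-! Write `B = ∑ fᵢ` and `h = ∑ bᵢ fᵢ`, and let `c = (ℓⁿ + (Ŝ/2) ℓⁿ⁻¹) / n!` be the constant
leading part of the expansion of `B`. Since `∫ h dμ = ∑ bᵢ γᵢ = 0`, the `μ`-integral of `B⁻¹ h`
equals that of `(B⁻¹ - c⁻¹) h`; as `|B - c| = O(ℓⁿ⁻²)` while `B, c ≥ ℓⁿ / (2 n!)`, it is
`O(ℓ⁻ⁿ⁻²) ∫ |h| dμ`. Replacing `μ` by `ν` multiplies this by `ℓⁿ` and adds an error of at most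
`((ℓ + C'ℓ⁻²)ⁿ - (ℓ - C'ℓ⁻²)ⁿ) ∫ |B⁻¹ h| dμ = O(ℓⁿ⁻³) · O(ℓ⁻ⁿ) ∫ |h| dμ`. Finally
`∫ |h| dμ ≤ ∑ |bᵢ| γᵢ ≤ 2 ∑ |bᵢ|`. -/

section MeasureComparison

variable {X : Type*} [MeasurableSpace X] {μ ν : Measure X} {a a₁ a₂ t : ℝ} {p g : X → ℝ}

lemma integral_le_mul_integral_of_le_smul (ha : 0 ≤ a) (hν : ν ≤ ENNReal.ofReal a • μ)
    (hp : 0 ≤ p) (hpi : Integrable p μ) : ∫ x, p x ∂ν ≤ a * ∫ x, p x ∂μ := by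
  calc ∫ x, p x ∂ν ≤ ∫ x, p x ∂(ENNReal.ofReal a • μ) :=
        integral_mono_measure hν (ae_of_all _ hp) (hpi.smul_measure ENNReal.ofReal_ne_top)
    _ = a * ∫ x, p x ∂μ := by rw [integral_smul_measure, ENNReal.toReal_ofReal ha, smul_eq_mul]

lemma mul_integral_le_integral_of_smul_le (ha : 0 ≤ a) (hν : ENNReal.ofReal a • μ ≤ ν)
    (hp : 0 ≤ p) (hpi : Integrable p ν) : a * ∫ x, p x ∂μ ≤ ∫ x, p x ∂ν := by
  calc a * ∫ x, p x ∂μ = ∫ x, p x ∂(ENNReal.ofReal a • μ) := by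
        rw [integral_smul_measure, ENNReal.toReal_ofReal ha, smul_eq_mul]
    _ ≤ ∫ x, p x ∂ν := integral_mono_measure hν (ae_of_all _ hp) hpi

variable (h₁ : 0 ≤ a₁) (h₁t : a₁ ≤ t) (ht₂ : t ≤ a₂)
  (hlo : ENNReal.ofReal a₁ • μ ≤ ν) (hhi : ν ≤ ENNReal.ofReal a₂ • μ)
include h₁ h₁t ht₂ hlo hhi

lemma abs_integral_sub_mul_integral_le_of_nonneg (hp : 0 ≤ p) (hpi : Integrable p μ) :
    |∫ x, p x ∂ν - t * ∫ x, p x ∂μ| ≤ (a₂ - a₁) * ∫ x, p x ∂μ := by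
  have hpν : Integrable p ν := hpi.of_measure_le_smul ENNReal.ofReal_ne_top hhi
  have hlow := mul_integral_le_integral_of_smul_le h₁ hlo hp hpν
  have hupp := integral_le_mul_integral_of_le_smul (h₁.trans (h₁t.trans ht₂)) hhi hp hpi
  have hp0 : 0 ≤ ∫ x, p x ∂μ := integral_nonneg hp
  rw [abs_le]
  constructor <;> nlinarith

lemma abs_integral_sub_mul_integral_le (hg : Integrable g μ) :
    |∫ x, g x ∂ν - t * ∫ x, g x ∂μ| ≤ (a₂ - a₁) * ∫ x, |g x| ∂μ := by
  have hgν : Integrable g ν := hg.of_measure_le_smul ENNReal.ofReal_ne_top hhi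
  have hpos := abs_integral_sub_mul_integral_le_of_nonneg h₁ h₁t ht₂ hlo hhi
    (fun x => le_max_right (g x) 0) hg.pos_part
  have hneg := abs_integral_sub_mul_integral_le_of_nonneg h₁ h₁t ht₂ hlo hhi
    (fun x => le_max_right (-g x) 0) hg.neg_part
  have hsplit : ∀ ρ : Measure X, Integrable g ρ →
      ∫ x, g x ∂ρ = ∫ x, max (g x) 0 ∂ρ - ∫ x, max (-g x) 0 ∂ρ := fun ρ hρ => by
    rw [← integral_sub hρ.pos_part hρ.neg_part]
    simp only [max_zero_sub_max_neg_zero_eq_self]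
  have habs : ∫ x, |g x| ∂μ = ∫ x, max (g x) 0 ∂μ + ∫ x, max (-g x) 0 ∂μ := by
    rw [← integral_add hg.pos_part hg.neg_part]
    simp only [max_zero_add_max_neg_zero_eq_abs_self]
  rw [hsplit ν hgν, hsplit μ hg, habs]
  calc _ = |(∫ x, max (g x) 0 ∂ν - t * ∫ x, max (g x) 0 ∂μ)
          - (∫ x, max (-g x) 0 ∂ν - t * ∫ x, max (-g x) 0 ∂μ)| := by ring_nf
    _ ≤ _ := (abs_sub _ _).trans (by linarith)

end MeasureComparison

section Integrals

variable {X : Type*} [MeasurableSpace X] {μ : Measure X}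

lemma abs_integral_mul_le_of_integral_eq_zero {u h : X → ℝ} {k ε : ℝ}
    (hu : AEStronglyMeasurable u μ) (huk : ∀ x, |u x - k| ≤ ε)
    (hh : Integrable h μ) (hh0 : ∫ x, h x ∂μ = 0) :
    |∫ x, u x * h x ∂μ| ≤ ε * ∫ x, |h x| ∂μ := by
  have hint : Integrable (fun x => (u x - k) * h x) μ :=
    hh.bdd_mul (hu.sub aestronglyMeasurable_const) (ae_of_all _ huk)
  have hshift : ∫ x, u x * h x ∂μ = ∫ x, (u x - k) * h x ∂μ := by
    have : ∀ x, u x * h x = (u x - k) * h x + k * h x := fun x => by ring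
    simp_rw [this]
    rw [integral_add hint (hh.const_mul k), integral_const_mul, hh0, mul_zero, add_zero]
  rw [hshift, ← Real.norm_eq_abs, ← integral_const_mul ε fun x => |h x|]
  refine norm_integral_le_of_norm_le (hh.abs.const_mul ε) (ae_of_all _ fun x => ?_)
  rw [norm_mul, Real.norm_eq_abs]
  exact mul_le_mul_of_nonneg_right (huk x) (abs_nonneg _)

lemma integral_abs_sum_mul_le {ι : Type*} (s : Finset ι) {f : ι → X → ℝ} (b : ι → ℝ)
    (hf : ∀ i, 0 ≤ f i) (hfi : ∀ i, Integrable (f i) μ) :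
    ∫ x, |∑ i ∈ s, b i * f i x| ∂μ ≤ ∑ i ∈ s, |b i| * ∫ x, f i x ∂μ := by
  calc ∫ x, |∑ i ∈ s, b i * f i x| ∂μ ≤ ∫ x, ∑ i ∈ s, |b i| * f i x ∂μ := by
        refine integral_mono (integrable_finsetSum s fun i _ => (hfi i).const_mul (b i)).abs
          (integrable_finsetSum s fun i _ => (hfi i).const_mul |b i|) fun x => ?_
        refine (abs_sum_le_sum_abs _ _).trans_eq (sum_congr rfl fun i _ => ?_)
        rw [abs_mul, abs_of_nonneg (hf i x)]
    _ = ∑ i ∈ s, |b i| * ∫ x, f i x ∂μ := by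
        rw [integral_finsetSum s fun i _ => (hfi i).const_mul _]
        simp only [integral_const_mul]

end Integrals

lemma mul_pow_add_sub_pow_sub_le {ℓ ε : ℝ} (n : ℕ) (hε : 0 ≤ ε) (hεℓ : ε ≤ ℓ) :
    ℓ * ((ℓ + ε) ^ n - (ℓ - ε) ^ n) ≤ 2 * n * (2 * ℓ) ^ n * ε := by
  have hℓ : 0 ≤ ℓ := hε.trans hεℓ
  have hmax : max |ℓ + ε| |ℓ - ε| = ℓ + ε := by
    rw [abs_of_nonneg (by linarith), abs_of_nonneg (by linarith)]
    exact max_eq_left (by linarith)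
  have hdiff := (le_abs_self _).trans (abs_pow_sub_pow_le (ℓ + ε) (ℓ - ε) n)
  rw [hmax, show ℓ + ε - (ℓ - ε) = 2 * ε by ring, abs_of_nonneg (by linarith)] at hdiff
  have hgrow : ℓ * (n * (ℓ + ε) ^ (n - 1)) ≤ n * (2 * ℓ) ^ n := by
    rcases n with _ | n
    · simp
    · have hpow : (ℓ + ε) ^ n ≤ (2 * ℓ) ^ n := pow_le_pow_left₀ (by linarith) (by linarith) n
      rw [Nat.add_sub_cancel, pow_succ (2 * ℓ)]
      have hk : (0 : ℝ) ≤ (n + 1 : ℕ) := Nat.cast_nonneg _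
      nlinarith [mul_le_mul hpow (by linarith : ℓ ≤ 2 * ℓ) hℓ (by positivity)]
  calc ℓ * ((ℓ + ε) ^ n - (ℓ - ε) ^ n) ≤ ℓ * (2 * ε * n * (ℓ + ε) ^ (n - 1)) :=
        mul_le_mul_of_nonneg_left hdiff hℓ
    _ = 2 * ε * (ℓ * (n * (ℓ + ε) ^ (n - 1))) := by ring
    _ ≤ 2 * ε * (n * (2 * ℓ) ^ n) := mul_le_mul_of_nonneg_left hgrow (by positivity)
    _ = 2 * n * (2 * ℓ) ^ n * ε := by ring

lemma abs_inv_sub_inv_le {m x y : ℝ} (hm : 0 < m) (hx : m ≤ x) (hy : m ≤ y) :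
    |x⁻¹ - y⁻¹| ≤ |x - y| / m ^ 2 := by
  have hx0 : 0 < x := hm.trans_le hx
  have hy0 : 0 < y := hm.trans_le hy
  rw [inv_sub_inv hx0.ne' hy0.ne', abs_div, abs_sub_comm, abs_of_pos (mul_pos hx0 hy0)]
  exact div_le_div_of_nonneg_left (abs_nonneg _) (by positivity)
    (by nlinarith [mul_le_mul hx hy hm.le hx0.le])

section Expansion

variable {F P ℓ s C y : ℝ}

lemma le_two_mul_of_abs_expansion_le (hP : 0 ≤ P) (hℓ : 1 ≤ ℓ) (hC : 0 ≤ C)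
    (hℓs : |s| + 2 * C ≤ ℓ) (hy : |y - P - s / 2 * (P / ℓ)| ≤ C * (P / ℓ ^ 2)) :
    P ≤ 2 * y := by
  have hPℓ : 0 ≤ P / ℓ := by positivity
  have hsq : P / ℓ ^ 2 ≤ P / ℓ :=
    div_le_div_of_nonneg_left hP (by positivity) (by nlinarith)
  have hs : -|s| * (P / ℓ) ≤ s * (P / ℓ) := mul_le_mul_of_nonneg_right (neg_abs_le s) hPℓ
  have hlin : (|s| + 2 * C) * (P / ℓ) ≤ P := by
    calc (|s| + 2 * C) * (P / ℓ) ≤ ℓ * (P / ℓ) := mul_le_mul_of_nonneg_right hℓs hPℓ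
      _ = P := by field_simp
  nlinarith [(abs_le.mp hy).1, mul_le_mul_of_nonneg_left hsq hC]

variable (hF : 0 < F) (hP : 0 < P) (hℓ : 1 ≤ ℓ) (hC : 0 ≤ C) (hℓs : |s| + 2 * C ≤ ℓ)
  (hy : |F * y - P - s / 2 * (P / ℓ)| ≤ C * (P / ℓ ^ 2))
include hF hP hℓ hC hℓs hy

lemma half_div_le_of_abs_expansion_le : P / (2 * F) ≤ y := by
  rw [div_le_iff₀ (by positivity)]
  linarith [le_two_mul_of_abs_expansion_le hP.le hℓ hC hℓs hy]

lemma abs_inv_le_of_abs_expansion_le : |y⁻¹| ≤ 2 * F / P := by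
  have hy0 : 0 < y := (by positivity : 0 < P / (2 * F)).trans_le
    (half_div_le_of_abs_expansion_le hF hP hℓ hC hℓs hy)
  rw [abs_inv, abs_of_pos hy0, ← inv_div]
  exact inv_anti₀ (by positivity) (half_div_le_of_abs_expansion_le hF hP hℓ hC hℓs hy)

lemma abs_inv_sub_le_of_abs_expansion_le :
    |y⁻¹ - F / (P + s / 2 * (P / ℓ))| ≤ 4 * F * C / (P * ℓ ^ 2) := by
  set c := (P + s / 2 * (P / ℓ)) / F with hc
  have hFc : F * c = P + s / 2 * (P / ℓ) := by rw [hc]; field_simp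
  have hcm : P / (2 * F) ≤ c := half_div_le_of_abs_expansion_le hF hP hℓ hC hℓs
    (by rw [hFc, sub_sub, sub_self, abs_zero]; positivity)
  have hyc : |y - c| ≤ C * (P / ℓ ^ 2) / F := by
    rw [le_div_iff₀ hF, ← abs_of_pos hF, ← abs_mul, mul_comm, mul_sub, hFc, ← sub_sub]
    exact hy
  rw [← inv_div]
  calc |y⁻¹ - c⁻¹| ≤ |y - c| / (P / (2 * F)) ^ 2 :=
        abs_inv_sub_inv_le (by positivity)
          (half_div_le_of_abs_expansion_le hF hP hℓ hC hℓs hy) hcm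
    _ ≤ C * (P / ℓ ^ 2) / F / (P / (2 * F)) ^ 2 := by gcongr
    _ = 4 * F * C / (P * ℓ ^ 2) := by field_simp; ring

end Expansion

theorem abs_integral_inv_mul_le_of_expansion {X : Type*} [MeasurableSpace X] {μ ν : Measure X}
    {n : ℕ} {F s C C' ℓ : ℝ} (hF : 0 < F) (hC : 0 ≤ C) (hC' : 0 ≤ C') (hℓ : 1 ≤ ℓ)
    (hℓs : |s| + 2 * C ≤ ℓ) (hℓC' : C' ≤ ℓ)
    {B h : X → ℝ} (hBm : Measurable B) (hh : Integrable h μ) (hh0 : ∫ x, h x ∂μ = 0)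
    (hB : ∀ x, |F * B x - ℓ ^ n - s / 2 * (ℓ ^ n / ℓ)| ≤ C * (ℓ ^ n / ℓ ^ 2))
    (hlo : ENNReal.ofReal ((ℓ - C' / ℓ ^ 2) ^ n) • μ ≤ ν)
    (hhi : ν ≤ ENNReal.ofReal ((ℓ + C' / ℓ ^ 2) ^ n) • μ) :
    |∫ x, (B x)⁻¹ * h x ∂ν| ≤ 4 * F * (C + n * 2 ^ n * C') / ℓ ^ 2 * ∫ x, |h x| ∂μ := by
  set P := ℓ ^ n
  set ε := C' / ℓ ^ 2 with hεdef
  have hP : 0 < P := by positivity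
  have hε : 0 ≤ ε := by positivity
  have hεℓ : ε ≤ ℓ := (div_le_self hC' (one_le_pow₀ hℓ)).trans hℓC'
  have hinv : ∀ x, |(B x)⁻¹| ≤ 2 * F / P := fun x =>
    abs_inv_le_of_abs_expansion_le hF hP hℓ hC hℓs (hB x)
  have hgi : Integrable (fun x => (B x)⁻¹ * h x) μ :=
    hh.bdd_mul hBm.inv.aestronglyMeasurable (ae_of_all _ hinv)
  have hμ : |∫ x, (B x)⁻¹ * h x ∂μ| ≤ 4 * F * C / (P * ℓ ^ 2) * ∫ x, |h x| ∂μ :=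
    abs_integral_mul_le_of_integral_eq_zero hBm.inv.aestronglyMeasurable
      (fun x => abs_inv_sub_le_of_abs_expansion_le hF hP hℓ hC hℓs (hB x)) hh hh0
  have hL1 : ∫ x, |(B x)⁻¹ * h x| ∂μ ≤ 2 * F / P * ∫ x, |h x| ∂μ := by
    rw [← integral_const_mul]
    refine integral_mono hgi.abs (hh.abs.const_mul _) fun x => ?_
    rw [abs_mul]
    exact mul_le_mul_of_nonneg_right (hinv x) (abs_nonneg _)
  have h₁ : (ℓ - ε) ^ n ≤ P := pow_le_pow_left₀ (by linarith) (by linarith) n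
  have h₂ : P ≤ (ℓ + ε) ^ n := pow_le_pow_left₀ (by linarith) (by linarith) n
  have hD : (ℓ + ε) ^ n - (ℓ - ε) ^ n ≤ 2 * n * 2 ^ n * P * ε := by
    have := mul_pow_add_sub_pow_sub_le n hε hεℓ
    rw [mul_pow] at this
    nlinarith
  have hν := abs_integral_sub_mul_integral_le (pow_nonneg (by linarith) n) h₁ h₂ hlo hhi hgi
  calc |∫ x, (B x)⁻¹ * h x ∂ν|
      ≤ |∫ x, (B x)⁻¹ * h x ∂ν - P * ∫ x, (B x)⁻¹ * h x ∂μ|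
        + P * |∫ x, (B x)⁻¹ * h x ∂μ| := by
        have := abs_sub_abs_le_abs_sub (∫ x, (B x)⁻¹ * h x ∂ν) (P * ∫ x, (B x)⁻¹ * h x ∂μ)
        rw [abs_mul, abs_of_pos hP] at this
        linarith
    _ ≤ 2 * n * 2 ^ n * P * ε * (2 * F / P * ∫ x, |h x| ∂μ)
        + P * (4 * F * C / (P * ℓ ^ 2) * ∫ x, |h x| ∂μ) := by
        gcongr
        exact hν.trans (mul_le_mul hD hL1 (integral_nonneg fun x => abs_nonneg _) (by positivity))
    _ = 4 * F * (C + n * 2 ^ n * C') / ℓ ^ 2 * ∫ x, |h x| ∂μ := by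
        rw [hεdef]
        field_simp
        ring

theorem stmt_5_general (n : ℕ) (Shat : ℝ) (C C' : ℝ) (hC : 0 < C) (hC' : 0 < C') :
    ∃ (C₂ : ℝ) (ℓ₀ : ℝ), 0 < C₂ ∧ 1 ≤ ℓ₀ ∧
      ∀ (X : Type*) [MeasurableSpace X] (μ ν : Measure X),
        IsFiniteMeasure μ → IsFiniteMeasure ν →
        ∀ ℓ : ℝ, ℓ₀ ≤ ℓ →
        ∀ N : ℕ, 1 ≤ N →
        ∀ (f : Fin N → X → ℝ) (b : Fin N → ℝ),
        (∀ i x, 0 ≤ f i x) →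
        (∀ i, ∃ M : ℝ, ∀ x, f i x ≤ M) →
        (∀ i, Measurable (f i)) →
        b ≠ 0 →
        (∑ i, b i * ∫ x, f i x ∂μ) = 0 →
        (∀ i, (∫ x, f i x ∂μ) ≤ 2) →
        (∀ x, |(n.factorial : ℝ) * (∑ i, f i x) - ℓ ^ (n : ℤ) - (Shat / 2) * ℓ ^ ((n : ℤ) - 1)|
          ≤ C * ℓ ^ ((n : ℤ) - 2)) →
        (∀ A : Set X, MeasurableSet A →
          ENNReal.ofReal ((ℓ - C' / ℓ ^ 2) ^ n) * μ A ≤ ν A ∧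
          ν A ≤ ENNReal.ofReal ((ℓ + C' / ℓ ^ 2) ^ n) * μ A) →
        |(ℓ / ∑ i, |b i|) * ∫ x, (∑ i, f i x)⁻¹ * (∑ i, b i * f i x) ∂ν| ≤ C₂ / ℓ := by
  refine ⟨8 * n.factorial * (C + n * 2 ^ n * C'), 1 + |Shat| + 2 * C + C', by positivity,
    by linarith [abs_nonneg Shat], ?_⟩
  intro X _ μ ν _ _ ℓ hℓ N _ f b hf0 hfM hfm hb horth hγ hB hcmp
  have hℓ1 : 1 ≤ ℓ := by linarith [abs_nonneg Shat]
  have hfi : ∀ i, Integrable (f i) μ := fun i => by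
    obtain ⟨M, hM⟩ := hfM i
    exact .of_bound (hfm i).aestronglyMeasurable M
      (ae_of_all _ fun x => by rw [Real.norm_of_nonneg (hf0 i x)]; exact hM x)
  have hexp : ∀ x, |(n.factorial : ℝ) * (∑ i, f i x) - ℓ ^ n - Shat / 2 * (ℓ ^ n / ℓ)|
      ≤ C * (ℓ ^ n / ℓ ^ 2) := by
    simpa only [zpow_sub₀ (by positivity : ℓ ≠ 0), zpow_natCast, zpow_one, zpow_ofNat,
      pow_one] using hB
  have hbound := abs_integral_inv_mul_le_of_expansion (Nat.cast_pos.mpr n.factorial_pos)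
    hC.le hC'.le hℓ1 (by linarith) (by linarith [abs_nonneg Shat])
    (Finset.measurable_sum _ fun i _ => hfm i)
    (integrable_finsetSum _ fun i _ => (hfi i).const_mul (b i))
    (by rw [integral_finsetSum _ fun i _ => (hfi i).const_mul (b i)]
        simpa only [integral_const_mul] using horth)
    hexp (Measure.le_iff.mpr fun A hA => (hcmp A hA).1)
    (Measure.le_iff.mpr fun A hA => (hcmp A hA).2)
  have hH : ∫ x, |∑ i, b i * f i x| ∂μ ≤ 2 * ∑ i, |b i| := by
    refine (integral_abs_sum_mul_le _ b hf0 hfi).trans ?_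
    rw [mul_sum]
    exact sum_le_sum fun i _ => by
      rw [mul_comm 2]
      exact mul_le_mul_of_nonneg_left (hγ i) (abs_nonneg _)
  have hS : 0 < ∑ i, |b i| := by
    obtain ⟨i, hi⟩ := Function.ne_iff.mp hb
    exact (abs_pos.mpr hi).trans_le (single_le_sum (fun j _ => abs_nonneg (b j)) (mem_univ i))
  rw [abs_mul, abs_of_pos (by positivity)]
  calc (ℓ / ∑ i, |b i|) * |∫ x, (∑ i, f i x)⁻¹ * (∑ i, b i * f i x) ∂ν|
      ≤ (ℓ / ∑ i, |b i|)
          * (4 * n.factorial * (C + n * 2 ^ n * C') / ℓ ^ 2 * (2 * ∑ i, |b i|)) := by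
        gcongr
        exact hbound.trans (by gcongr)
    _ = 8 * n.factorial * (C + n * 2 ^ n * C') / ℓ := by field_simp; ring

/-- Measure-theoretic core of Theorem 8.1: under the extremal-metric Bergman
kernel expansion, the normalized Chow-norm derivative at `s = 0` is `O(ℓ⁻¹)`. -/
theorem stmt_5 (n : ℕ) (hn : 1 ≤ n) (Shat : ℝ) (C C' : ℝ) (hC : 0 < C) (hC' : 0 < C') :
    ∃ (C₂ : ℝ) (ℓ₀ : ℝ), 0 < C₂ ∧ 1 ≤ ℓ₀ ∧
      ∀ (X : Type*) [MeasurableSpace X] (μ ν : Measure X),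
        IsFiniteMeasure μ → IsFiniteMeasure ν →
        ∀ ℓ : ℝ, ℓ₀ ≤ ℓ →
        ∀ N : ℕ, 1 ≤ N →
        ∀ (f : Fin N → X → ℝ) (b : Fin N → ℝ),
        (∀ i x, 0 ≤ f i x) →
        (∀ i, ∃ M : ℝ, ∀ x, f i x ≤ M) →
        (∀ i, Measurable (f i)) →
        b ≠ 0 →
        (∑ i, b i * ∫ x, f i x ∂μ) = 0 →
        (∀ i, (∫ x, f i x ∂μ) ≤ 2) →
        (∀ x, |(n.factorial : ℝ) * (∑ i, f i x) - ℓ ^ (n : ℤ) - (Shat / 2) * ℓ ^ ((n : ℤ) - 1)|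
          ≤ C * ℓ ^ ((n : ℤ) - 2)) →
        (∀ A : Set X, MeasurableSet A →
          ENNReal.ofReal ((ℓ - C' / ℓ ^ 2) ^ n) * μ A ≤ ν A ∧
          ν A ≤ ENNReal.ofReal ((ℓ + C' / ℓ ^ 2) ^ n) * μ A) →
        |(ℓ / ∑ i, |b i|) * ∫ x, (∑ i, f i x)⁻¹ * (∑ i, b i * f i x) ∂ν| ≤ C₂ / ℓ :=
  stmt_5_general n Shat C C' hC hC'
end
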